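/- If U is a semi-regular representation of a finite group G (i.e., U contains every irreducible representation of G at least once), then with Δ as above, tr(U_g† U_h Δ) = δ_{g,h} for all g, h ∈ G. In particular, the operators {U_g}_{g∈G} are linearly independent. -/

import Mathlib

/-!
Writing `U_g = ⊕_i D^i(g) ⊗ 1_{m_i}`, one gets `tr (U_g† U_h Δ) = |G|⁻¹ ∑_i d_i χ_i(g⁻¹h)`,
so everything reduces to the identity `∑_i d_i χ_i = |G| δ_1` for the regular character.
By the Schur orthogonality relations, `|G| f(k) = ∑_g f(g) ∑_i d_i χ_i(g⁻¹k)` holds for every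
matrix coefficient `f` of every `D^i`; evaluating it at `f = δ_1` gives the identity once the
matrix coefficients span all functions on `G`. They do by semi-regularity: otherwise the orthogonal
complement of their span is a nonzero right-invariant subspace, a minimal such subspace carries an
irreducible unitary representation, this is isomorphic to some `D^i`, and then its elements are
themselves combinations of matrix coefficients of `D^i`. Linear independence follows because the
`U_g` are orthonormal for the sesquilinear pairing `(A, B) ↦ tr (A† B Δ)`.
-/

open scoped Classical
open Matrix BigOperators
open scoped InnerProductSpace ComplexOrder

section Schur

variable {G : Type*} [Group G] {n m : Type*} [Fintype n] [DecidableEq n] [Fintype m]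
  [DecidableEq m]

def IsIntertwiner (A : G →* unitaryGroup n ℂ) (B : G →* unitaryGroup m ℂ) (T : Matrix n m ℂ) :
    Prop :=
  ∀ g, (A g : Matrix n n ℂ) * T = T * (B g : Matrix m m ℂ)

def HasScalarCommutant (A : G →* unitaryGroup n ℂ) : Prop :=
  ∀ X, IsIntertwiner A A X → ∃ c : ℂ, X = c • 1

lemma coe_map_inv_unitary (A : G →* unitaryGroup n ℂ) (g : G) :
    (A g⁻¹ : Matrix n n ℂ) = (A g : Matrix n n ℂ)ᴴ := by
  rw [map_inv, UnitaryGroup.inv_val, star_eq_conjTranspose]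

lemma coe_map_mul_unitary (A : G →* unitaryGroup n ℂ) (g h : G) :
    (A (g * h) : Matrix n n ℂ) = A g * A h := by
  rw [map_mul, UnitaryGroup.mul_val]

lemma coe_map_inv_mul_self (A : G →* unitaryGroup n ℂ) (g : G) :
    (A g⁻¹ : Matrix n n ℂ) * A g = 1 := by
  rw [← coe_map_mul_unitary, inv_mul_cancel, map_one, UnitaryGroup.one_val]

lemma mul_single_one_mul_apply (M : Matrix n n ℂ) (N : Matrix m m ℂ) (p a : n) (q b : m) :
    (M * single p q (1 : ℂ) * N) a b = M a p * N q b := by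
  simp [Matrix.mul_apply, single_apply, ite_and]

variable {A : G →* unitaryGroup n ℂ} {B : G →* unitaryGroup m ℂ}

lemma IsIntertwiner.conjTranspose {T : Matrix n m ℂ} (hT : IsIntertwiner A B T) :
    IsIntertwiner B A Tᴴ := fun g => by
  simpa only [coe_map_inv_unitary, conjTranspose_mul, conjTranspose_conjTranspose] using
    (congrArg Matrix.conjTranspose (hT g⁻¹)).symm

lemma IsIntertwiner.mul {l : Type*} [Fintype l] [DecidableEq l] {C : G →* unitaryGroup l ℂ}
    {T : Matrix n m ℂ} {S : Matrix m l ℂ} (hT : IsIntertwiner A B T) (hS : IsIntertwiner B C S) :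
    IsIntertwiner A C (T * S) := fun g => by
  rw [← Matrix.mul_assoc, hT g, Matrix.mul_assoc, hS g, Matrix.mul_assoc]

variable [Fintype G]

def twirl (A : G →* unitaryGroup n ℂ) (B : G →* unitaryGroup m ℂ) (X : Matrix n m ℂ) :
    Matrix n m ℂ :=
  ∑ g, (A g : Matrix n n ℂ) * X * (B g⁻¹ : Matrix m m ℂ)

lemma isIntertwiner_twirl (X : Matrix n m ℂ) : IsIntertwiner A B (twirl A B X) := fun h => by
  rw [twirl, Matrix.mul_sum, Matrix.sum_mul]
  refine Fintype.sum_equiv (Equiv.mulLeft h) _ _ fun g => ?_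
  simp only [Equiv.coe_mulLeft, _root_.mul_inv_rev, coe_map_mul_unitary, Matrix.mul_assoc,
    coe_map_inv_mul_self, Matrix.mul_one]

lemma twirl_single_apply (p : n) (q : m) (a : n) (b : m) :
    twirl A B (single p q 1) a b = ∑ g, (A g : Matrix n n ℂ) a p * (B g⁻¹ : Matrix m m ℂ) q b := by
  simp only [twirl, Matrix.sum_apply, mul_single_one_mul_apply]

lemma trace_twirl (X : Matrix n n ℂ) : trace (twirl A A X) = Fintype.card G * trace X := by
  simp only [twirl, trace_sum, trace_mul_cycle _ X, coe_map_inv_mul_self, Matrix.one_mul,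
    Finset.sum_const, Finset.card_univ, nsmul_eq_mul]

theorem sum_coeff_mul_coeff_inv_eq_zero (hAB : ∀ T, IsIntertwiner A B T → T = 0)
    (a p : n) (q b : m) :
    ∑ g, (A g : Matrix n n ℂ) a p * (B g⁻¹ : Matrix m m ℂ) q b = 0 := by
  rw [← twirl_single_apply, hAB _ (isIntertwiner_twirl _), Matrix.zero_apply]

theorem sum_coeff_mul_coeff_inv_of_hasScalarCommutant (hA : HasScalarCommutant A) (a p q b : n) :
    ∑ g, (A g : Matrix n n ℂ) a p * (A g⁻¹ : Matrix n n ℂ) q b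
      = if p = q ∧ a = b then (Fintype.card G : ℂ) / Fintype.card n else 0 := by
  have : Nonempty n := ⟨a⟩
  obtain ⟨c, hc⟩ := hA _ (isIntertwiner_twirl (single p q 1))
  have hc' : c = Fintype.card G * trace (single p q (1 : ℂ)) / Fintype.card n := by
    rw [eq_div_iff (Nat.cast_ne_zero.2 Fintype.card_ne_zero), ← trace_twirl, hc, trace_smul,
      trace_one, smul_eq_mul]
  rw [← twirl_single_apply, hc, hc']
  by_cases hpq : p = q
  · subst hpq; simp [one_apply]
  · simp [trace_single_eq_of_ne _ _ _ hpq, hpq]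

end Schur

section UnitaryRep

variable {G : Type*} [Group G] {E : Type*} [NormedAddCommGroup E] [InnerProductSpace ℂ E]

def IsUnitaryRep (ρ : Representation ℂ G E) : Prop :=
  ∀ g x y, ⟪ρ g x, ρ g y⟫_ℂ = ⟪x, y⟫_ℂ

namespace IsUnitaryRep

variable {ρ : Representation ℂ G E}

lemma inner_inv_apply_left (hρ : IsUnitaryRep ρ) (g : G) (x y : E) :
    ⟪ρ g⁻¹ x, y⟫_ℂ = ⟪x, ρ g y⟫_ℂ := by
  rw [← hρ g, ρ.self_inv_apply]

noncomputable def orthogonal (hρ : IsUnitaryRep ρ) (V : Subrepresentation ρ) :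
    Subrepresentation ρ where
  toSubmodule := V.toSubmoduleᗮ
  apply_mem_toSubmodule g f hf u hu := by
    rw [← hρ.inner_inv_apply_left]
    exact hf _ (V.apply_mem_toSubmodule g⁻¹ hu)

lemma subrepresentation (hρ : IsUnitaryRep ρ) (V : Subrepresentation ρ) :
    IsUnitaryRep V.toRepresentation :=
  fun g x y => hρ g x y

lemma mem_unitary [FiniteDimensional ℂ E] (hρ : IsUnitaryRep ρ) (g : G) :
    ρ g ∈ unitary (E →ₗ[ℂ] E) := by
  have hstar : star (ρ g) = ρ g⁻¹ := by
    rw [LinearMap.star_eq_adjoint, eq_comm, LinearMap.eq_adjoint_iff]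
    exact hρ.inner_inv_apply_left g
  rw [Unitary.mem_iff, hstar, ← map_mul, ← map_mul, inv_mul_cancel, mul_inv_cancel, map_one,
    and_self]

variable {ι : Type*} [Fintype ι] [DecidableEq ι] [FiniteDimensional ℂ E]

noncomputable def matrixRep (hρ : IsUnitaryRep ρ) (b : OrthonormalBasis ι ℂ E) :
    G →* unitaryGroup ι ℂ where
  toFun g := ⟨LinearMap.toMatrixOrthonormal b (ρ g), Unitary.map_mem _ (hρ.mem_unitary g)⟩
  map_one' := by ext1; simp
  map_mul' g h := Subtype.ext <| by
    simp only [map_mul, UnitaryGroup.mul_val]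

lemma coe_matrixRep (hρ : IsUnitaryRep ρ) (b : OrthonormalBasis ι ℂ E) (g : G) :
    (hρ.matrixRep b g : Matrix ι ι ℂ) = LinearMap.toMatrixOrthonormal b (ρ g) :=
  rfl

end IsUnitaryRep

lemma Subrepresentation.nontrivial_of_isAtom {W : Type*} [AddCommGroup W] [Module ℂ W]
    {ρ : Representation ℂ G W} {V : Subrepresentation ρ} (hV : IsAtom V) :
    Nontrivial V.toSubmodule :=
  Submodule.nontrivial_iff_ne_bot.2 fun h => hV.1 (Subrepresentation.toSubmodule_injective h)

theorem Subrepresentation.exists_eq_smul_one_of_isAtom {W : Type*} [AddCommGroup W]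
    [Module ℂ W] [FiniteDimensional ℂ W] {ρ : Representation ℂ G W} {V : Subrepresentation ρ}
    (hV : IsAtom V) (S : Module.End ℂ V.toSubmodule)
    (hS : ∀ g, Commute S (V.toRepresentation g)) : ∃ c : ℂ, S = c • 1 := by
  have := Subrepresentation.nontrivial_of_isAtom hV
  obtain ⟨μ, hμ⟩ := Module.End.exists_eigenvalue S
  let K : Subrepresentation ρ :=
    ⟨(S.eigenspace μ).map V.toSubmodule.subtype, by
      rintro g _ ⟨v, hv, rfl⟩
      refine ⟨V.toRepresentation g v, ?_, rfl⟩
      simp only [SetLike.mem_coe, Module.End.mem_eigenspace_iff] at hv ⊢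
      rw [← Module.End.mul_apply, (hS g).eq, Module.End.mul_apply, hv, map_smul]⟩
  have hKV : K ≤ V := by
    rintro _ ⟨v, -, rfl⟩
    exact v.2
  have hK : K = V := (hV.le_iff.1 hKV).resolve_left fun h => by
    obtain ⟨v, hv⟩ := hμ.exists_hasEigenvector
    have hvK : (v : W) ∈ K := ⟨v, hv.1, rfl⟩
    rw [h] at hvK
    exact hv.2 (Subtype.ext ((Submodule.mem_bot ℂ).1 hvK))
  refine ⟨μ, LinearMap.ext fun v => ?_⟩
  have hv : (v : W) ∈ K := by rw [hK]; exact v.2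
  obtain ⟨w, hw, hwv⟩ := hv
  rw [Subtype.ext hwv] at hw
  simpa using Module.End.mem_eigenspace_iff.1 hw

instance Subrepresentation.isAtomic {W : Type*} [AddCommGroup W] [Module ℂ W]
    [FiniteDimensional ℂ W] {ρ : Representation ℂ G W} : IsAtomic (Subrepresentation ρ) :=
  isAtomic_of_orderBot_wellFounded_lt
    (StrictMono.wellFoundedLT (f := Subrepresentation.toSubmodule) fun _ _ h => h).wf

theorem IsUnitaryRep.hasScalarCommutant_matrixRep_of_isAtom {ι : Type*} [Fintype ι]
    [DecidableEq ι] [FiniteDimensional ℂ E] {ρ : Representation ℂ G E} (hρ : IsUnitaryRep ρ)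
    {V : Subrepresentation ρ} (hV : IsAtom V) (b : OrthonormalBasis ι ℂ V.toSubmodule) :
    HasScalarCommutant ((hρ.subrepresentation V).matrixRep b) := by
  intro X hX
  obtain ⟨c, hc⟩ :=
    V.exists_eq_smul_one_of_isAtom hV ((LinearMap.toMatrixOrthonormal b).symm X) fun g => by
      simpa only [IsUnitaryRep.coe_matrixRep, StarAlgEquiv.symm_apply_apply] using
        (Commute.map (hX g) (LinearMap.toMatrixOrthonormal b).symm).symm
  refine ⟨c, ?_⟩
  rw [← (LinearMap.toMatrixOrthonormal b).apply_symm_apply X, hc, map_smul, map_one]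

end UnitaryRep

section RightRegular

variable (G : Type*) [Group G]

noncomputable def rightRegular : Representation ℂ G (EuclideanSpace ℂ G) where
  toFun x :=
    { toFun := fun f => WithLp.toLp 2 fun g => f (g * x)
      map_add' := fun _ _ => rfl
      map_smul' := fun _ _ => rfl }
  map_one' := by ext f g; simp
  map_mul' x y := by
    ext f g
    exact congrArg f (mul_assoc g x y).symm

variable {G}

@[simp] lemma rightRegular_apply (x : G) (f : EuclideanSpace ℂ G) (g : G) :
    rightRegular G x f g = f (g * x) :=
  rfl

lemma isUnitaryRep_rightRegular [Fintype G] : IsUnitaryRep (rightRegular G) := fun x f h => by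
  simp only [PiLp.inner_apply, rightRegular_apply]
  exact Fintype.sum_equiv (Equiv.mulRight x) _ _ fun g => rfl

end RightRegular

section MatrixCoeff

variable {G : Type*} [Group G] {n m : Type*} [Fintype n] [DecidableEq n] [Fintype m]
  [DecidableEq m]

def matrixCoeff (A : G →* unitaryGroup n ℂ) (p q : n) : EuclideanSpace ℂ G :=
  WithLp.toLp 2 fun g => (A g : Matrix n n ℂ) p q

@[simp] lemma matrixCoeff_apply (A : G →* unitaryGroup n ℂ) (p q : n) (g : G) :
    matrixCoeff A p q g = (A g : Matrix n n ℂ) p q :=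
  rfl

def coeffSpan (A : G →* unitaryGroup n ℂ) : Submodule ℂ (EuclideanSpace ℂ G) :=
  Submodule.span ℂ (Set.range (Function.uncurry (matrixCoeff A)))

lemma matrixCoeff_mem_coeffSpan (A : G →* unitaryGroup n ℂ) (p q : n) :
    matrixCoeff A p q ∈ coeffSpan A :=
  Submodule.subset_span ⟨(p, q), rfl⟩

lemma rightRegular_matrixCoeff (A : G →* unitaryGroup n ℂ) (x : G) (p q : n) :
    rightRegular G x (matrixCoeff A p q) = ∑ c, (A x : Matrix n n ℂ) c q • matrixCoeff A p c := by
  ext g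
  simp [Matrix.mul_apply, mul_comm]

lemma coeffSpan_le_comap_rightRegular (A : G →* unitaryGroup n ℂ) (x : G) :
    coeffSpan A ≤ (coeffSpan A).comap (rightRegular G x) :=
  Submodule.span_le.2 <| by
    rintro _ ⟨⟨p, q⟩, rfl⟩
    rw [SetLike.mem_coe, Submodule.mem_comap, Function.uncurry_apply_pair,
      rightRegular_matrixCoeff]
    exact Submodule.sum_mem _ fun c _ => Submodule.smul_mem _ _ (matrixCoeff_mem_coeffSpan A p c)

lemma coeffSpan_le_of_eq_mul_mul {E : G →* unitaryGroup m ℂ} {A : G →* unitaryGroup n ℂ}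
    (P : Matrix m n ℂ) (Q : Matrix n m ℂ)
    (h : ∀ x, (E x : Matrix m m ℂ) = P * (A x : Matrix n n ℂ) * Q) :
    coeffSpan E ≤ coeffSpan A :=
  Submodule.span_le.2 <| by
    rintro _ ⟨⟨a, e⟩, rfl⟩
    have : matrixCoeff E a e = ∑ p, ∑ q, (P a p * Q q e) • matrixCoeff A p q := by
      ext x
      simp only [matrixCoeff_apply, h, Matrix.mul_apply, Finset.sum_mul, WithLp.ofLp_sum,
        WithLp.ofLp_smul, Finset.sum_apply, Pi.smul_apply, smul_eq_mul]
      rw [Finset.sum_comm]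
      exact Finset.sum_congr rfl fun p _ => Finset.sum_congr rfl fun q _ => by ring
    rw [SetLike.mem_coe, Function.uncurry_apply_pair, this]
    exact Submodule.sum_mem _ fun p _ => Submodule.sum_mem _ fun q _ =>
      Submodule.smul_mem _ _ (matrixCoeff_mem_coeffSpan A p q)

lemma coeffSpan_le_of_isIntertwiner {E : G →* unitaryGroup m ℂ} {A : G →* unitaryGroup n ℂ}
    (hE : HasScalarCommutant E) {T : Matrix m n ℂ} (hT : IsIntertwiner E A T) (hT0 : T ≠ 0) :
    coeffSpan E ≤ coeffSpan A := by
  -- By Schur, `T Tᴴ = c • 1` with `c ≠ 0`, hence `E x = c⁻¹ • T (A x) Tᴴ`.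
  obtain ⟨c, hc⟩ := hE _ (hT.mul hT.conjTranspose)
  have hc0 : c ≠ 0 := by
    rintro rfl
    rw [zero_smul] at hc
    exact hT0 (Matrix.self_mul_conjTranspose_eq_zero.1 hc)
  refine coeffSpan_le_of_eq_mul_mul (c⁻¹ • T) Tᴴ fun x => ?_
  rw [Matrix.smul_mul, Matrix.smul_mul, ← hT x, Matrix.mul_assoc, hc, Matrix.mul_smul,
    Matrix.mul_one, smul_smul, inv_mul_cancel₀ hc0, one_smul]

end MatrixCoeff

section Completeness

variable {G : Type*} [Group G] [Fintype G]

lemma subrep_le_coeffSpan_matrixRep {ι : Type*} [Fintype ι] [DecidableEq ι]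
    (V : Subrepresentation (rightRegular G)) (b : OrthonormalBasis ι ℂ V.toSubmodule) :
    V.toSubmodule ≤ coeffSpan ((isUnitaryRep_rightRegular.subrepresentation V).matrixRep b) := by
  intro f hf
  set E := (isUnitaryRep_rightRegular.subrepresentation V).matrixRep b
  set v : V.toSubmodule := ⟨f, hf⟩
  have hrepr : ∀ x, b.repr (V.toRepresentation x v) = (E x : Matrix ι ι ℂ) *ᵥ b.repr v :=
    fun x => (LinearMap.toMatrix_mulVec_repr b.toBasis b.toBasis _ v).symm
  -- `f x = (ρ_x f) 1`, with `ρ_x f` expanded in the basis `b`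
  have hf_eq : f = ∑ a, ∑ e, ((b a : EuclideanSpace ℂ G) 1 * b.repr v e) • matrixCoeff E a e := by
    ext x
    calc f x = (V.toRepresentation x v : EuclideanSpace ℂ G) 1 := congrArg f (one_mul x).symm
      _ = ∑ a, b.repr (V.toRepresentation x v) a * (b a : EuclideanSpace ℂ G) 1 := by
          conv_lhs => rw [← b.sum_repr (V.toRepresentation x v)]
          simp only [AddSubmonoidClass.coe_finsetSum, SetLike.val_smul, WithLp.ofLp_sum,
            WithLp.ofLp_smul, Finset.sum_apply, Pi.smul_apply, smul_eq_mul]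
      _ = _ := by
          simp only [hrepr, mulVec, dotProduct, Finset.sum_mul, WithLp.ofLp_sum, WithLp.ofLp_smul,
            Finset.sum_apply, Pi.smul_apply, matrixCoeff_apply, smul_eq_mul]
          exact Finset.sum_congr rfl fun a _ => Finset.sum_congr rfl fun e _ => by ring
  rw [hf_eq]
  exact Submodule.sum_mem _ fun a _ => Submodule.sum_mem _ fun e _ =>
    Submodule.smul_mem _ _ (matrixCoeff_mem_coeffSpan E a e)

theorem iSup_coeffSpan_eq_top {I : Type*} {d : I → ℕ}
    (D : ∀ i, G →* unitaryGroup (Fin (d i)) ℂ)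
    (hsemireg : ∀ n, 0 < n → ∀ E : G →* unitaryGroup (Fin n) ℂ, HasScalarCommutant E →
      ∃ i, ∃ T : Matrix (Fin n) (Fin (d i)) ℂ, T ≠ 0 ∧ IsIntertwiner E (D i) T) :
    ⨆ i, coeffSpan (D i) = ⊤ := by
  have hρ : IsUnitaryRep (rightRegular G) := isUnitaryRep_rightRegular
  let M : Subrepresentation (rightRegular G) :=
    ⟨⨆ i, coeffSpan (D i), fun x => show _ ≤ Submodule.comap _ _ from iSup_le fun i =>
      (coeffSpan_le_comap_rightRegular (D i) x).trans
        (Submodule.comap_mono (le_iSup (fun i => coeffSpan (D i)) i))⟩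
  rw [← Submodule.orthogonal_eq_bot_iff]
  by_contra hne
  obtain ⟨V, hV, hVM⟩ := (eq_bot_or_exists_atom_le (hρ.orthogonal M)).resolve_left
    fun h => hne (congrArg Subrepresentation.toSubmodule h)
  have := Subrepresentation.nontrivial_of_isAtom hV
  let b := stdOrthonormalBasis ℂ V.toSubmodule
  have hE := hρ.hasScalarCommutant_matrixRep_of_isAtom hV b
  obtain ⟨i, T, hT0, hT⟩ := hsemireg _ Module.finrank_pos _ hE
  have hVM' : V.toSubmodule ≤ M.toSubmodule := (subrep_le_coeffSpan_matrixRep V b).trans <|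
    (coeffSpan_le_of_isIntertwiner hE hT hT0).trans (le_iSup (fun i => coeffSpan (D i)) i)
  refine hV.1 (Subrepresentation.toSubmodule_injective (eq_bot_iff.2 fun f hf => ?_))
  exact (Submodule.mem_bot ℂ).2 (inner_self_eq_zero.1 (hVM hf f (hVM' hf)))

end Completeness

section RegularCharacter

variable {G : Type*} [Group G] [Fintype G] {I : Type*} [Fintype I] {d : I → ℕ}

def regularChar (D : ∀ i, G →* unitaryGroup (Fin (d i)) ℂ) (x : G) : ℂ :=
  ∑ i, (d i : ℂ) * trace (D i x : Matrix (Fin (d i)) (Fin (d i)) ℂ)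

lemma sum_coeff_mul_trace_inv_mul {n m : Type*} [Fintype n] [DecidableEq n] [Fintype m]
    [DecidableEq m] (A : G →* unitaryGroup n ℂ) (B : G →* unitaryGroup m ℂ) (p q : n) (k : G) :
    ∑ g, (A g : Matrix n n ℂ) p q * trace (B (g⁻¹ * k) : Matrix m m ℂ)
      = ∑ a, ∑ e, (∑ g, (A g : Matrix n n ℂ) p q * (B g⁻¹ : Matrix m m ℂ) a e) *
          (B k : Matrix m m ℂ) e a := by
  simp only [coe_map_mul_unitary, trace, diag, Matrix.mul_apply, Finset.mul_sum, Finset.sum_mul]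
  rw [Finset.sum_comm]
  refine Finset.sum_congr rfl fun a _ => ?_
  rw [Finset.sum_comm]
  exact Finset.sum_congr rfl fun e _ => Finset.sum_congr rfl fun g _ => by ring

variable {D : ∀ i, G →* unitaryGroup (Fin (d i)) ℂ}

lemma sum_matrixCoeff_mul_regularChar (hirr : ∀ i, HasScalarCommutant (D i))
    (hdisj : ∀ i j, i ≠ j → ∀ T, IsIntertwiner (D i) (D j) T → T = 0) (j : I)
    (p q : Fin (d j)) (k : G) :
    ∑ g, matrixCoeff (D j) p q g * regularChar D (g⁻¹ * k)
      = Fintype.card G * matrixCoeff (D j) p q k := by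
  simp only [regularChar, matrixCoeff_apply, Finset.mul_sum, mul_left_comm _ (d _ : ℂ)]
  rw [Finset.sum_comm, Finset.sum_eq_single j]
  · have hdj : (d j : ℂ) ≠ 0 := Nat.cast_ne_zero.2 p.pos.ne'
    rw [← Finset.mul_sum, sum_coeff_mul_trace_inv_mul]
    simp only [sum_coeff_mul_coeff_inv_of_hasScalarCommutant (hirr j), Fintype.card_fin, ite_and,
      ite_mul, zero_mul, Finset.sum_ite_irrel, Finset.sum_ite_eq, Finset.mem_univ, if_true,
      Finset.sum_const_zero]
    field_simp
  · intro i _ hij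
    rw [← Finset.mul_sum, sum_coeff_mul_trace_inv_mul]
    simp only [sum_coeff_mul_coeff_inv_eq_zero (hdisj j i (Ne.symm hij)), zero_mul,
      Finset.sum_const_zero, mul_zero]
  · simp

theorem card_mul_apply_eq_sum_mul_regularChar (hirr : ∀ i, HasScalarCommutant (D i))
    (hdisj : ∀ i j, i ≠ j → ∀ T, IsIntertwiner (D i) (D j) T → T = 0)
    (hspan : ⨆ i, coeffSpan (D i) = ⊤) (f : EuclideanSpace ℂ G) (k : G) :
    Fintype.card G * f k = ∑ g, f g * regularChar D (g⁻¹ * k) := by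
  have hspan' :
      Submodule.span ℂ (⋃ i, Set.range (Function.uncurry (matrixCoeff (D i)))) = ⊤ := by
    rw [Submodule.span_iUnion]; exact hspan
  let proj (g : G) : EuclideanSpace ℂ G →ₗ[ℂ] ℂ := (EuclideanSpace.proj g).toLinearMap
  have hlin := LinearMap.ext_on hspan' (f := (Fintype.card G : ℂ) • proj k)
    (g := ∑ g, regularChar D (g⁻¹ * k) • proj g) fun f hf => by
      obtain ⟨i, ⟨p, q⟩, rfl⟩ := Set.mem_iUnion.1 hf
      simpa [proj, mul_comm] using (sum_matrixCoeff_mul_regularChar hirr hdisj i p q k).symm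
  simpa [proj, mul_comm] using LinearMap.congr_fun hlin f

theorem regularChar_eq_ite (hirr : ∀ i, HasScalarCommutant (D i))
    (hdisj : ∀ i j, i ≠ j → ∀ T, IsIntertwiner (D i) (D j) T → T = 0)
    (hspan : ⨆ i, coeffSpan (D i) = ⊤) (k : G) :
    regularChar D k = if k = 1 then (Fintype.card G : ℂ) else 0 := by
  simpa [eq_comm] using
    (card_mul_apply_eq_sum_mul_regularChar hirr hdisj hspan (EuclideanSpace.single 1 1) k).symm

end RegularCharacter

section Isotypic

open scoped Kronecker

variable {G : Type*} [Group G] {I : Type*} [Fintype I] [DecidableEq I] {d : I → ℕ}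

def isotypicSum (D : ∀ i, G →* unitaryGroup (Fin (d i)) ℂ) (m : I → ℕ) (g : G) :
    Matrix (Σ i, Fin (d i) × Fin (m i)) (Σ i, Fin (d i) × Fin (m i)) ℂ :=
  blockDiagonal' fun i =>
    (D i g : Matrix (Fin (d i)) (Fin (d i)) ℂ) ⊗ₖ (1 : Matrix (Fin (m i)) (Fin (m i)) ℂ)

variable (D : ∀ i, G →* unitaryGroup (Fin (d i)) ℂ) (m : I → ℕ)

lemma isotypicSum_conjTranspose_mul (g h : G) :
    (isotypicSum D m g)ᴴ * isotypicSum D m h = isotypicSum D m (g⁻¹ * h) := by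
  simp only [isotypicSum, blockDiagonal'_conjTranspose, ← blockDiagonal'_mul,
    conjTranspose_kronecker, ← mul_kronecker_mul, conjTranspose_one, Matrix.one_mul,
    ← coe_map_inv_unitary, ← coe_map_mul_unitary]

lemma trace_isotypicSum_mul_blockDiagonal' (c : I → ℂ) (k : G) :
    trace (isotypicSum D m k * blockDiagonal' fun i => c i • 1)
      = ∑ i, c i * m i * trace (D i k : Matrix (Fin (d i)) (Fin (d i)) ℂ) := by
  simp only [isotypicSum, ← blockDiagonal'_mul, trace_blockDiagonal', Matrix.mul_smul,
    Matrix.mul_one, trace_smul, trace_kronecker, trace_one, Fintype.card_fin, smul_eq_mul]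
  exact Finset.sum_congr rfl fun i _ => by ring

end Isotypic

theorem linearIndependent_of_trace_conjTranspose_mul_mul_eq_ite {R ι n : Type*} [CommRing R]
    [StarRing R] [Fintype n] [DecidableEq ι] (U : ι → Matrix n n R) (Δ : Matrix n n R)
    (h : ∀ i j, trace ((U i)ᴴ * U j * Δ) = if i = j then 1 else 0) : LinearIndependent R U := by
  refine linearIndependent_iff'.2 fun s c hc i hi => ?_
  have := congrArg (fun A => trace ((U i)ᴴ * A * Δ)) hc
  simpa [Matrix.mul_sum, Matrix.sum_mul, trace_sum, h, hi] using this

theorem semiregular_trace_delta_delta_general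
    {G : Type*} [Group G] [Fintype G] {I : Type*} [Fintype I] [DecidableEq I]
    (d m : I → ℕ) (hm : ∀ i, 0 < m i)
    (D : ∀ i, G →* Matrix.unitaryGroup (Fin (d i)) ℂ)
    (hirr : ∀ i (X : Matrix (Fin (d i)) (Fin (d i)) ℂ),
      (∀ g, (D i g : Matrix (Fin (d i)) (Fin (d i)) ℂ) * X
          = X * (D i g : Matrix (Fin (d i)) (Fin (d i)) ℂ)) → ∃ c : ℂ, X = c • 1)
    (hdisj : ∀ i j, i ≠ j → ∀ T : Matrix (Fin (d i)) (Fin (d j)) ℂ,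
      (∀ g, (D i g : Matrix (Fin (d i)) (Fin (d i)) ℂ) * T
          = T * (D j g : Matrix (Fin (d j)) (Fin (d j)) ℂ)) → T = 0)
    -- semi-regularity: every irreducible unitary representation of G admits a nonzero
    -- intertwiner with (i.e. is isomorphic to) some block D^i
    (hsemireg : ∀ (n : ℕ), 0 < n → ∀ (E : G →* Matrix.unitaryGroup (Fin n) ℂ),
      (∀ X : Matrix (Fin n) (Fin n) ℂ,
        (∀ g, (E g : Matrix (Fin n) (Fin n) ℂ) * X = X * (E g : Matrix (Fin n) (Fin n) ℂ))
          → ∃ c : ℂ, X = c • 1) →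
      ∃ i, ∃ T : Matrix (Fin n) (Fin (d i)) ℂ, T ≠ 0 ∧
        ∀ g, (E g : Matrix (Fin n) (Fin n) ℂ) * T
            = T * (D i g : Matrix (Fin (d i)) (Fin (d i)) ℂ))
    (U : G → Matrix (Σ i, Fin (d i) × Fin (m i)) (Σ i, Fin (d i) × Fin (m i)) ℂ)
    (hU : ∀ g, U g = Matrix.blockDiagonal' (fun i =>
      Matrix.kroneckerMap (· * ·) (D i g : Matrix (Fin (d i)) (Fin (d i)) ℂ)
        (1 : Matrix (Fin (m i)) (Fin (m i)) ℂ)))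
    (Δ : Matrix (Σ i, Fin (d i) × Fin (m i)) (Σ i, Fin (d i) × Fin (m i)) ℂ)
    (hΔ : Δ = Matrix.blockDiagonal' (fun i =>
      ((d i : ℂ) / ((m i : ℂ) * (Fintype.card G : ℂ)))
        • (1 : Matrix (Fin (d i) × Fin (m i)) (Fin (d i) × Fin (m i)) ℂ))) :
    (∀ g h : G, Matrix.trace ((U g)ᴴ * U h * Δ) = (if g = h then (1:ℂ) else 0)) ∧
    LinearIndependent ℂ U := by
  obtain rfl : U = isotypicSum D m := funext hU
  have hregular := regularChar_eq_ite hirr hdisj (iSup_coeffSpan_eq_top D hsemireg)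
  have hcard : (Fintype.card G : ℂ) ≠ 0 := Nat.cast_ne_zero.2 Fintype.card_ne_zero
  have htrace : ∀ g h : G, trace ((isotypicSum D m g)ᴴ * isotypicSum D m h * Δ)
      = if g = h then (1 : ℂ) else 0 := by
    intro g h
    rw [hΔ, isotypicSum_conjTranspose_mul, trace_isotypicSum_mul_blockDiagonal']
    calc _ = (Fintype.card G : ℂ)⁻¹ * regularChar D (g⁻¹ * h) := by
          rw [regularChar, Finset.mul_sum]
          refine Finset.sum_congr rfl fun i _ => ?_
          have hmi : (m i : ℂ) ≠ 0 := Nat.cast_ne_zero.2 (hm i).ne'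
          field_simp
      _ = _ := by
          rw [hregular, inv_mul_eq_one]
          split_ifs <;> simp [hcard]
  exact ⟨htrace, linearIndependent_of_trace_conjTranspose_mul_mul_eq_ite _ _ htrace⟩

/-- If U is a semi-regular unitary representation of a finite group G (its
isotypic decomposition U_g = ⊕_i D^i(g) ⊗ 1_{m_i} contains every irreducible representation
of G), then with Δ = (1/|G|) ⊕_i (d_i/m_i) 1 as above, tr(U_g† U_h Δ) = δ_{g,h} for all
g, h ∈ G; in particular the operators {U_g} are linearly independent. -/
theorem semiregular_trace_delta_delta
    {G : Type*} [Group G] [Fintype G] {I : Type*} [Fintype I] [DecidableEq I]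
    (d m : I → ℕ) (hd : ∀ i, 0 < d i) (hm : ∀ i, 0 < m i)
    (D : ∀ i, G →* Matrix.unitaryGroup (Fin (d i)) ℂ)
    (hirr : ∀ i (X : Matrix (Fin (d i)) (Fin (d i)) ℂ),
      (∀ g, (D i g : Matrix (Fin (d i)) (Fin (d i)) ℂ) * X
          = X * (D i g : Matrix (Fin (d i)) (Fin (d i)) ℂ)) → ∃ c : ℂ, X = c • 1)
    (hdisj : ∀ i j, i ≠ j → ∀ T : Matrix (Fin (d i)) (Fin (d j)) ℂ,
      (∀ g, (D i g : Matrix (Fin (d i)) (Fin (d i)) ℂ) * T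
          = T * (D j g : Matrix (Fin (d j)) (Fin (d j)) ℂ)) → T = 0)
    -- semi-regularity: every irreducible unitary representation of G admits a nonzero
    -- intertwiner with (i.e. is isomorphic to) some block D^i
    (hsemireg : ∀ (n : ℕ), 0 < n → ∀ (E : G →* Matrix.unitaryGroup (Fin n) ℂ),
      (∀ X : Matrix (Fin n) (Fin n) ℂ,
        (∀ g, (E g : Matrix (Fin n) (Fin n) ℂ) * X = X * (E g : Matrix (Fin n) (Fin n) ℂ))
          → ∃ c : ℂ, X = c • 1) →
      ∃ i, ∃ T : Matrix (Fin n) (Fin (d i)) ℂ, T ≠ 0 ∧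
        ∀ g, (E g : Matrix (Fin n) (Fin n) ℂ) * T
            = T * (D i g : Matrix (Fin (d i)) (Fin (d i)) ℂ))
    (U : G → Matrix (Σ i, Fin (d i) × Fin (m i)) (Σ i, Fin (d i) × Fin (m i)) ℂ)
    (hU : ∀ g, U g = Matrix.blockDiagonal' (fun i =>
      Matrix.kroneckerMap (· * ·) (D i g : Matrix (Fin (d i)) (Fin (d i)) ℂ)
        (1 : Matrix (Fin (m i)) (Fin (m i)) ℂ)))
    (Δ : Matrix (Σ i, Fin (d i) × Fin (m i)) (Σ i, Fin (d i) × Fin (m i)) ℂ)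
    (hΔ : Δ = Matrix.blockDiagonal' (fun i =>
      ((d i : ℂ) / ((m i : ℂ) * (Fintype.card G : ℂ)))
        • (1 : Matrix (Fin (d i) × Fin (m i)) (Fin (d i) × Fin (m i)) ℂ))) :
    (∀ g h : G, Matrix.trace ((U g)ᴴ * U h * Δ) = (if g = h then (1:ℂ) else 0)) ∧
    LinearIndependent ℂ U :=
  semiregular_trace_delta_delta_general d m hm D hirr hdisj hsemireg U hU Δ hΔ
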